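/- Let β : (−1, 1) → ℝ be continuous and monotone increasing with β(0) = 0, β(r) → +∞ as r → 1⁻, and β(r) → −∞ as r → (−1)⁺. Let m₀ ∈ (−1, 1). Then there exist constants c₄ > 0 and c₅ > 0 such that β(r)·(r − m₀) ≥ c₄·|β(r)| − c₅ for all r ∈ (−1, 1). -/
import Mathlib


open Set Filter

/-- Coercivity estimate (3.13)–(3.14) (Miranville–Zelik): if `β` is continuous,
monotone increasing on `(−1,1)` with `β(0)=0` and `β(r) → ±∞` as `r → ±1`,
and `m₀ ∈ (−1,1)`, then there exist `c₄, c₅ > 0` such that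
`β(r)(r − m₀) ≥ c₄ |β(r)| − c₅` on `(−1,1)`. -/
theorem coercivity_singular_potential (β : ℝ → ℝ) (m₀ : ℝ)
    (hm₀ : m₀ ∈ Ioo (-1 : ℝ) 1)
    (hβ_cont : ContinuousOn β (Ioo (-1 : ℝ) 1))
    (hβ_mono : MonotoneOn β (Ioo (-1 : ℝ) 1))
    (hβ_zero : β 0 = 0)
    (hβ_top : Tendsto β (nhdsWithin 1 (Iio 1)) atTop)
    (hβ_bot : Tendsto β (nhdsWithin (-1) (Ioi (-1))) atBot) :
    ∃ c₄ : ℝ, 0 < c₄ ∧ ∃ c₅ : ℝ, 0 < c₅ ∧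
      ∀ r ∈ Ioo (-1 : ℝ) 1, c₄ * |β r| - c₅ ≤ β r * (r - m₀) := by
  obtain ⟨hm1, hm2⟩ := hm₀
  set a : ℝ := (m₀ - 1) / 2 with ha_def
  set b : ℝ := (m₀ + 1) / 2 with hb_def
  have ha1 : (-1 : ℝ) < a := by simp only [ha_def]; linarith
  have ha0 : a < 0 := by simp only [ha_def]; linarith
  have hb0 : (0 : ℝ) < b := by simp only [hb_def]; linarith
  have hb1 : b < 1 := by simp only [hb_def]; linarith
  have hsub : Icc a b ⊆ Ioo (-1 : ℝ) 1 := fun x hx =>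
    ⟨lt_of_lt_of_le ha1 hx.1, lt_of_le_of_lt hx.2 hb1⟩
  have hcomp : IsCompact (Icc a b) := isCompact_Icc
  obtain ⟨M, hM⟩ := hcomp.exists_bound_of_continuousOn (hβ_cont.mono hsub)
  have hM0 : 0 ≤ M := le_trans (abs_nonneg _) (hM 0 ⟨ha0.le, hb0.le⟩)
  set c₄ : ℝ := min ((1 - m₀) / 2) ((1 + m₀) / 2) with hc4_def
  have hc4_pos : 0 < c₄ := by
    apply lt_min <;> linarith
  have hc4a : c₄ ≤ (1 - m₀) / 2 := min_le_left _ _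
  have hc4b : c₄ ≤ (1 + m₀) / 2 := min_le_right _ _
  refine ⟨c₄, hc4_pos, (c₄ + 2) * M + 1, by positivity, ?_⟩
  intro r hr
  have h0mem : (0 : ℝ) ∈ Ioo (-1 : ℝ) 1 := by constructor <;> norm_num
  rcases le_or_gt b r with hrb | hrb
  · -- right region: r ≥ b > 0
    have hβnn : 0 ≤ β r := by
      have := hβ_mono h0mem hr (le_trans hb0.le hrb)
      linarith [hβ_zero ▸ this]
    rw [abs_of_nonneg hβnn]
    have hrm : c₄ ≤ r - m₀ := by
      have : (1 - m₀) / 2 ≤ r - m₀ := by simp only [hb_def] at hrb; linarith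
      linarith
    nlinarith [mul_le_mul_of_nonneg_left hrm hβnn, hM 0 ⟨ha0.le, hb0.le⟩]
  rcases le_or_gt r a with hra | hra
  · -- left region: r ≤ a < 0
    have hβnp : β r ≤ 0 := by
      have := hβ_mono hr h0mem (le_trans hra ha0.le)
      linarith [hβ_zero ▸ this]
    rw [abs_of_nonpos hβnp]
    have hrm : c₄ ≤ m₀ - r := by
      have : (1 + m₀) / 2 ≤ m₀ - r := by simp only [ha_def] at hra; linarith
      linarith
    nlinarith [mul_le_mul_of_nonneg_left hrm (neg_nonneg.mpr hβnp)]
  · -- middle region: a < r < b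
    have hmem : r ∈ Icc a b := ⟨hra.le, hrb.le⟩
    have hb := hM r hmem
    rw [Real.norm_eq_abs] at hb
    have h1 : -M ≤ β r := by
      have := neg_abs_le (β r); linarith
    have h2 : β r ≤ M := le_trans (le_abs_self _) hb
    have habs : |β r| ≤ M := hb
    have hrm1 : r - m₀ ≤ 2 := by linarith [hr.2]
    have hrm2 : -2 ≤ r - m₀ := by linarith [hr.1]
    have hc4le : c₄ ≤ 1 := le_trans hc4a (by linarith)
    nlinarith [mul_le_mul_of_nonneg_right habs hc4_pos.le, abs_nonneg (β r)]
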